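/- arXiv:0708.1259 — 2 statements merged into one kernel-verified Lean document; each statement's English description precedes it below -/
import Mathlib

section
/- In ℚ[[x]], the identity ∑_{d≥1} ((1/d)∑_{k|d} μ(d/k) m^k) x^d = ∑_{l≥1} (μ(l)/l) log(1/(1 - m x^l)) holds for any integer m ≥ 1, i.e., the generating function of necklace numbers equals -∑_{l≥1}(μ(l)/l) log(1 - m x^l). -/
/-! Write `G = 1/(1 - x)`. Then `1/(1 - m x^l)` is `G` rescaled by `x ↦ m x` and expanded by
`x ↦ x^l`, and both operations commute with the logarithm, so everything reduces to
`log G = ∑_{j ≥ 1} x^j / j`. Since `(G - 1)^k = x^k G^k` has `j`-th coefficient `C(j-1, k-1)`,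
this is the binomial identity `∑_k (-1)^(k+1) C(j-1, k-1) / k = 1/j`. Hence the `l`-th summand
contributes `μ(l) m^(n/l) / n` to the coefficient of `x^n`, and reindexing `l ↦ n/l` gives the
necklace number. -/

open PowerSeries

/-- Formal power series logarithm of a series f with constant term 1:
`log f = ∑_{k≥1} (-1)^{k+1} (f-1)^k / k`, written coefficientwise (the coefficient of x^n
only involves k ≤ n since f - 1 has zero constant term). -/
noncomputable def pLog (f : PowerSeries ℚ) : PowerSeries ℚ :=
  PowerSeries.mk fun n =>
    ∑ k ∈ Finset.Icc 1 n, (-1 : ℚ) ^ (k + 1) * (k : ℚ)⁻¹ * PowerSeries.coeff (R := ℚ) n ((f - 1) ^ k)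

/-- The geometric series `1/(1 - m x^l) = ∑_{j≥0} m^j x^{jl}` in ℚ[[x]]. -/
noncomputable def geomSeries (m l : ℕ) : PowerSeries ℚ :=
  PowerSeries.mk fun n => if l ∣ n then (m : ℚ) ^ (n / l) else 0

namespace PowerSeries

theorem coeff_mk_one_sub_one_pow {R : Type*} [CommRing R] {k : ℕ} (hk : k ≠ 0) (n : ℕ) :
    coeff n ((mk 1 - 1 : R⟦X⟧) ^ k) = if k ≤ n then ((n - 1).choose (k - 1) : R) else 0 := by
  obtain ⟨d, rfl⟩ := Nat.exists_eq_add_one_of_ne_zero hk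
  have hX : (mk 1 - 1 : R⟦X⟧) = X * mk 1 := by
    ext (_ | _) <;> simp [coeff_succ_X_mul]
  rw [hX, mul_pow, coeff_X_pow_mul', mk_one_pow_eq_mk_choose_add]
  split_ifs with h
  · rw [coeff_mk]; congr 2; omega
  · rfl

end PowerSeries

open Finset

theorem sum_Icc_neg_one_pow_mul_inv_mul_choose {K : Type*} [Field K] [CharZero K] {n : ℕ}
    (hn : n ≠ 0) :
    ∑ k ∈ Icc 1 n, (-1 : K) ^ (k + 1) * (k : K)⁻¹ * ((n - 1).choose (k - 1) : K) =
      (n : K)⁻¹ := by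
  obtain ⟨j, rfl⟩ := Nat.exists_eq_add_one_of_ne_zero hn
  have hchoose : ∀ i : ℕ, ((i + 1 : ℕ) : K)⁻¹ * (j.choose i : K) =
      ((j + 1 : ℕ) : K)⁻¹ * ((j + 1).choose (i + 1) : K) := fun i => by
    have : ((j + 1 : ℕ) : K) * j.choose i = (j + 1).choose (i + 1) * (i + 1 : ℕ) := by
      exact_mod_cast Nat.add_one_mul_choose_eq j i
    field_simp
    linear_combination this
  have hsum : ∑ i ∈ range (j + 1), (-1 : K) ^ (i + 1) * ((j + 1).choose (i + 1) : K) = -1 := by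
    have h : ∑ i ∈ range (j + 1 + 1), (-1 : K) ^ i * ((j + 1).choose i : K) = 0 := by
      exact_mod_cast Int.alternating_sum_range_choose_of_ne (Nat.succ_ne_zero j)
    rw [sum_range_succ'] at h
    simpa [← eq_neg_iff_add_eq_zero] using h
  rw [← Ico_add_one_right_eq_Icc, sum_Ico_eq_sum_range]
  simp only [Nat.add_sub_cancel, add_comm 1]
  calc ∑ i ∈ range (j + 1), (-1 : K) ^ (i + 1 + 1) * ((i + 1 : ℕ) : K)⁻¹ * (j.choose i : K)
      = -((j + 1 : ℕ) : K)⁻¹ *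
          ∑ i ∈ range (j + 1), (-1 : K) ^ (i + 1) * ((j + 1).choose (i + 1) : K) := by
        rw [mul_sum]
        refine sum_congr rfl fun i _ => ?_
        linear_combination (-(-1 : K) ^ (i + 1)) * hchoose i
    _ = ((j + 1 : ℕ) : K)⁻¹ := by rw [hsum]; ring

theorem coeff_pLog_eq_sum_Icc {f : ℚ⟦X⟧} (hf : constantCoeff f = 1) {n N : ℕ}
    (hnN : n ≤ N) :
    coeff n (pLog f) =
      ∑ k ∈ Icc 1 N, (-1 : ℚ) ^ (k + 1) * (k : ℚ)⁻¹ * coeff n ((f - 1) ^ k) := by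
  rw [pLog, coeff_mk]
  refine sum_subset (Icc_subset_Icc_right hnN) fun k hkN hk => ?_
  have hX : X ^ k ∣ (f - 1) ^ k := pow_dvd_pow_of_dvd (X_dvd_iff.mpr (by simp [hf])) k
  rw [X_pow_dvd_iff.mp hX n (by simp only [mem_Icc] at hkN hk; omega), mul_zero]

theorem pLog_rescale (a : ℚ) (f : ℚ⟦X⟧) : pLog (rescale a f) = rescale a (pLog f) := by
  ext n
  have hsub : rescale a f - 1 = rescale a (f - 1) := by rw [map_sub, map_one]
  simp only [pLog, coeff_mk, coeff_rescale, hsub, ← map_pow, mul_sum]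
  exact sum_congr rfl fun k _ => by ring

theorem pLog_expand {l : ℕ} (hl : l ≠ 0) {f : ℚ⟦X⟧} (hf : constantCoeff f = 1) :
    pLog (expand l hl f) = expand l hl (pLog f) := by
  ext n
  have hsub : expand l hl f - 1 = expand l hl (f - 1) := by rw [map_sub, map_one]
  rw [coeff_expand, pLog, coeff_mk, hsub]
  simp only [← map_pow, coeff_expand]
  split_ifs
  · exact (coeff_pLog_eq_sum_Icc hf (Nat.div_le_self n l)).symm
  · simp

theorem pLog_mk_one : pLog (mk 1) = mk fun n => (n : ℚ)⁻¹ := by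
  ext n
  rw [pLog, coeff_mk, coeff_mk]
  rcases eq_or_ne n 0 with rfl | hn
  · simp
  rw [← sum_Icc_neg_one_pow_mul_inv_mul_choose hn]
  refine sum_congr rfl fun k hk => ?_
  obtain ⟨hk1, hkn⟩ := mem_Icc.mp hk
  rw [coeff_mk_one_sub_one_pow (by omega), if_pos hkn]

theorem geomSeries_eq_expand_rescale (m : ℕ) {l : ℕ} (hl : l ≠ 0) :
    geomSeries m l = expand l hl (rescale (m : ℚ) (mk 1)) := by
  ext n
  simp [geomSeries, coeff_expand]

theorem coeff_pLog_geomSeries (m : ℕ) {l : ℕ} (hl : l ≠ 0) (n : ℕ) :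
    coeff n (pLog (geomSeries m l)) =
      if l ∣ n then (m : ℚ) ^ (n / l) * ((n / l : ℕ) : ℚ)⁻¹ else 0 := by
  have hG : constantCoeff (rescale (m : ℚ) (mk 1)) = 1 := by
    simp [← coeff_zero_eq_constantCoeff_apply]
  rw [geomSeries_eq_expand_rescale m hl, pLog_expand hl hG, pLog_rescale, pLog_mk_one,
    coeff_expand, coeff_rescale, coeff_mk]

theorem necklace_generating_function_general (m : ℕ) :
    (PowerSeries.mk fun d =>
        if d = 0 then 0 else
          ((1 : ℚ) / d) * ∑ k ∈ d.divisors, (ArithmeticFunction.moebius (d / k) : ℚ) * (m : ℚ) ^ k)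
    = PowerSeries.mk (fun n =>
        ∑ l ∈ n.divisors,
          ((ArithmeticFunction.moebius l : ℚ) / l) * PowerSeries.coeff (R := ℚ) n (pLog (geomSeries m l))) := by
  ext n
  rw [coeff_mk, coeff_mk]
  rcases eq_or_ne n 0 with rfl | hn
  · simp
  rw [if_neg hn,
    ← Nat.sum_div_divisors n fun k => (ArithmeticFunction.moebius (n / k) : ℚ) * m ^ k, mul_sum]
  refine sum_congr rfl fun l hl => ?_
  have hln : l ∣ n := Nat.dvd_of_mem_divisors hl
  have hl0 : l ≠ 0 := ne_zero_of_dvd_ne_zero hn hln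
  rw [Nat.div_div_self hln hn, coeff_pLog_geomSeries m hl0, if_pos hln,
    Nat.cast_div hln (Nat.cast_ne_zero.mpr hl0)]
  field_simp

/-- In ℚ[[x]], for m ≥ 1,
`∑_{d≥1} ((1/d)∑_{k|d} μ(d/k) m^k) x^d = ∑_{l≥1} (μ(l)/l) log(1/(1 - m x^l))`
(the sum over l on the right contributes to the coefficient of x^n only for l | n). -/
theorem necklace_generating_function (m : ℕ) (hm : 1 ≤ m) :
    (PowerSeries.mk fun d =>
        if d = 0 then 0 else
          ((1 : ℚ) / d) * ∑ k ∈ d.divisors, (ArithmeticFunction.moebius (d / k) : ℚ) * (m : ℚ) ^ k)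
    = PowerSeries.mk (fun n =>
        ∑ l ∈ n.divisors,
          ((ArithmeticFunction.moebius l : ℚ) / l) * PowerSeries.coeff (R := ℚ) n (pLog (geomSeries m l))) :=
  necklace_generating_function_general m
end

section
/- For a quiver with no oriented cycles, with vertices ordered so that the Ringel matrix R (R_{ij} = δ_{ij} - #{arrows i→j}) is upper triangular with 1's on the diagonal, for every nonzero dimension vector α ∈ ℕ^I the product of q-binomial coefficients [−Rα, α] := ∏_{i∈I} [(−Rα)^i, α^i] vanishes in ℚ(q). -/
/-- The q-binomial type coefficient `[n,m] = (∏_{i=1}^m (1-q^{n+i}))/(∏_{i=1}^m (1-q^i))`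
in ℚ(q), for n ∈ ℤ, m ∈ ℕ. -/
noncomputable def qBinom (n : ℤ) (m : ℕ) : RatFunc ℚ :=
  (∏ i ∈ Finset.Icc 1 m, (1 - (RatFunc.X : RatFunc ℚ) ^ (n + (i : ℤ)))) /
    (∏ i ∈ Finset.Icc 1 m, (1 - (RatFunc.X : RatFunc ℚ) ^ (i : ℤ)))

/-!
Choose the largest vertex `i` with `α i ≠ 0`. Since `R` is upper unitriangular and `α` vanishes
beyond `i`, `(Rα)_i = α_i`, so the factor `[-α_i, α_i]` occurs in the product; its numerator
contains `1 - q^(-α_i + α_i) = 0`.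
-/

theorem qBinom_eq_zero {n : ℤ} {m : ℕ} (hn : n < 0) (hmn : -(m : ℤ) ≤ n) :
    qBinom n m = 0 := by
  have hmem : (-n).toNat ∈ Finset.Icc 1 m := Finset.mem_Icc.mpr ⟨by omega, by omega⟩
  have hfactor : 1 - (RatFunc.X : RatFunc ℚ) ^ (n + ((-n).toNat : ℕ)) = 0 := by
    rw [show n + ((-n).toNat : ℕ) = 0 by omega, zpow_zero, sub_self]
  rw [qBinom, Finset.prod_eq_zero hmem hfactor, zero_div]

theorem exists_ne_zero_forall_gt_eq_zero {ι M : Type*} [LinearOrder ι] [Finite ι] [Zero M]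
    {v : ι → M} (hv : v ≠ 0) : ∃ i, v i ≠ 0 ∧ ∀ j, i < j → v j = 0 := by
  obtain ⟨i, hi, hmax⟩ := (Function.support v).exists_max_image id (Set.toFinite _)
    (Function.support_nonempty_iff.mpr hv)
  exact ⟨i, hi, fun j hij => by_contra fun hj => (hmax j hj).not_gt hij⟩

theorem Matrix.IsUpperTriangular.mulVec_apply_of_forall_gt_eq_zero {ι R : Type*} [Fintype ι]
    [LinearOrder ι] [NonUnitalNonAssocSemiring R] {M : Matrix ι ι R} (hM : M.IsUpperTriangular)
    {v : ι → R} {i : ι} (hv : ∀ j, i < j → v j = 0) : M.mulVec v i = M i i * v i := by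
  refine Fintype.sum_eq_single i fun j hji => show M i j * v j = 0 from ?_
  rcases lt_or_gt_of_ne hji with hlt | hgt
  · rw [hM hlt, zero_mul]
  · rw [hv j hgt, mul_zero]

/-- For a quiver with no oriented cycles whose vertices `Fin r` are ordered so
that the arrow-count matrix `c` satisfies `c i j = 0` unless `i < j` (hence the Ringel matrix
`R i j = δ_ij - c i j` is upper triangular with ones on the diagonal), for every nonzero
dimension vector α the product `[−Rα, α] = ∏_i [(−Rα)_i, α_i]` of q-binomial coefficients
vanishes in ℚ(q). -/
theorem prod_qBinom_neg_Ringel_eq_zero (r : ℕ) (c : Fin r → Fin r → ℕ)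
    (hc : ∀ i j : Fin r, ¬ i < j → c i j = 0)
    (R : Fin r → Fin r → ℤ) (hR : ∀ i j, R i j = (if i = j then 1 else 0) - c i j)
    (α : Fin r → ℕ) (hα : α ≠ 0) :
    ∏ i : Fin r, qBinom (-(∑ j : Fin r, R i j * (α j : ℤ))) (α i) = 0 := by
  obtain ⟨i, hi, hgt⟩ := exists_ne_zero_forall_gt_eq_zero hα
  have hupper : Matrix.IsUpperTriangular (R : Matrix (Fin r) (Fin r) ℤ) :=
    fun k j (hjk : j < k) => by rw [hR, if_neg hjk.ne', hc k j hjk.not_gt, Nat.cast_zero, sub_zero]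
  have hdiag : R i i = 1 := by rw [hR, if_pos rfl, hc i i (lt_irrefl i), Nat.cast_zero, sub_zero]
  have hrow : ∑ j, R i j * (α j : ℤ) = α i := by
    have := hupper.mulVec_apply_of_forall_gt_eq_zero (v := fun j => (α j : ℤ))
      fun j hij => by rw [hgt j hij, Nat.cast_zero]
    rwa [hdiag, one_mul] at this
  refine Finset.prod_eq_zero (Finset.mem_univ i) ?_
  rw [hrow]
  exact qBinom_eq_zero (by omega) le_rfl
end
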